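/- arXiv:2010.09991 — 9 statements merged into one kernel-verified Lean document; each statement's English description precedes it below -/
import Mathlib

section
/- Let Q be a loop-less quiver with n arrows and m vertices, with incidence matrix I(Q) and unipotent upper triangular Gram matrix Ǧ_Q (so I(Q)^T I(Q) = Ǧ_Q + Ǧ_Q^T). Define Λ_Q := Id_m - I(Q)·Ǧ_Q^{-1}·I(Q)^T. Then Λ_Q is an invertible matrix whose inverse is Λ_{Q}^{-1} = Id_m - I(Q)·Ǧ_Q^{-T}·I(Q)^T. -/
open Matrix Polynomial

/-- Incidence matrix of a quiver with vertex set `Fin m`, arrow set `Fin n`,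
source map `s` and target map `t`: the column of arrow `i` is `e_{s i} - e_{t i}`. -/
def incMatrix {m n : ℕ} (s t : Fin n → Fin m) : Matrix (Fin m) (Fin n) ℤ :=
  Matrix.of fun v i => (if v = s i then (1 : ℤ) else 0) - (if v = t i then (1 : ℤ) else 0)

/-- Connectedness of the underlying multigraph of the quiver `(s, t)`. -/
def QuiverConnected {m n : ℕ} (s t : Fin n → Fin m) : Prop :=
  ∀ v w : Fin m,
    Relation.ReflTransGen (fun a b => ∃ i : Fin n, (s i = a ∧ t i = b) ∨ (s i = b ∧ t i = a)) v w

/-- The endpoint of arrow `i` other than `v` (for a loop-less quiver). -/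
def otherEnd {m n : ℕ} (s t : Fin n → Fin m) (i : Fin n) (v : Fin m) : Fin m :=
  if s i = v then t i else s i

/-- Iterate the minimally decreasing walk starting at `v`, using only arrows with
index `< b`, always crossing the maximal available arrow. Returns the final vertex. -/
def xiAux {m n : ℕ} (s t : Fin n → Fin m) (b : ℕ) (v : Fin m) : Fin m :=
  if h : (Finset.univ.filter (fun i : Fin n => (s i = v ∨ t i = v) ∧ i.val < b)).Nonempty then
    xiAux s t
      ((Finset.univ.filter (fun i : Fin n => (s i = v ∨ t i = v) ∧ i.val < b)).max' h).val
      (otherEnd s t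
        ((Finset.univ.filter (fun i : Fin n => (s i = v ∨ t i = v) ∧ i.val < b)).max' h) v)
  else v
termination_by b
decreasing_by
  exact (Finset.mem_filter.mp (Finset.max'_mem _ h)).2.2

/-- The permutation of vertices `ξ⁻` determined by structural minimally decreasing walks:
`xiDown s t v` is the end vertex of the structural decreasing walk starting at `v`. -/
def xiDown {m n : ℕ} (s t : Fin n → Fin m) (v : Fin m) : Fin m :=
  xiAux s t n v

/-- Iterate the minimally increasing walk starting at `v`, using only arrows with
index `≥ b`, always crossing the minimal available arrow. Returns the final vertex. -/
def xiAuxUp {m n : ℕ} (s t : Fin n → Fin m) (b : ℕ) (v : Fin m) : Fin m :=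
  if h : (Finset.univ.filter (fun i : Fin n => (s i = v ∨ t i = v) ∧ b ≤ i.val)).Nonempty then
    xiAuxUp s t
      (((Finset.univ.filter (fun i : Fin n => (s i = v ∨ t i = v) ∧ b ≤ i.val)).min' h).val + 1)
      (otherEnd s t
        ((Finset.univ.filter (fun i : Fin n => (s i = v ∨ t i = v) ∧ b ≤ i.val)).min' h) v)
  else v
termination_by n - b
decreasing_by
  have h1 := (Finset.mem_filter.mp (Finset.min'_mem _ h)).2.2
  have h2 := ((Finset.univ.filter (fun i : Fin n => (s i = v ∨ t i = v) ∧ b ≤ i.val)).min' h).isLt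
  omega

/-- The map `ξ⁺`: end vertex of the structural minimally increasing walk starting at `v`. -/
def xiUp {m n : ℕ} (s t : Fin n → Fin m) (v : Fin m) : Fin m :=
  xiAuxUp s t 0 v


/-- Source vertex of a walk-step `(i, ε)`: `s i` if traversed positively, else `t i`. -/
def stepSrc {m n : ℕ} (s t : Fin n → Fin m) (p : Fin n × Bool) : Fin m :=
  if p.2 then s p.1 else t p.1

/-- Target vertex of a walk-step `(i, ε)`. -/
def stepTgt {m n : ℕ} (s t : Fin n → Fin m) (p : Fin n × Bool) : Fin m :=
  if p.2 then t p.1 else s p.1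

lemma lam_helper {m n : ℕ} (I : Matrix (Fin m) (Fin n) ℤ) (G : Matrix (Fin n) (Fin n) ℤ)
    (hinv : G * G⁻¹ = 1) (hinv' : G⁻¹ * G = 1)
    (hGram : Iᵀ * I = G + Gᵀ) :
    (1 - I * G⁻¹ * Iᵀ) * (1 - I * (G⁻¹)ᵀ * Iᵀ) = 1 := by
  have hT : Gᵀ * (G⁻¹)ᵀ = 1 := by
    rw [← Matrix.transpose_mul, hinv', Matrix.transpose_one]
  have key : I * G⁻¹ * Iᵀ * (I * (G⁻¹)ᵀ * Iᵀ)
      = I * G⁻¹ * Iᵀ + I * (G⁻¹)ᵀ * Iᵀ := by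
    have : I * G⁻¹ * Iᵀ * (I * (G⁻¹)ᵀ * Iᵀ)
        = I * (G⁻¹ * (G + Gᵀ) * (G⁻¹)ᵀ) * Iᵀ := by
      rw [← hGram]; simp only [Matrix.mul_assoc]
    rw [this, Matrix.mul_add, hinv', Matrix.add_mul, Matrix.one_mul,
      Matrix.mul_assoc G⁻¹ Gᵀ, hT, Matrix.mul_one, Matrix.mul_add, Matrix.add_mul]
    abel
  rw [mul_sub, sub_mul, sub_mul, mul_one, mul_one, one_mul, key]
  abel

/-- `Λ_Q := Id - I(Q)·Ǧ_Q⁻¹·I(Q)ᵀ` is invertible with inverse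
`Id - I(Q)·Ǧ_Q⁻ᵀ·I(Q)ᵀ`. -/
theorem coxeterLaplace_invertible {m n : ℕ} (s t : Fin n → Fin m)
    (hloop : ∀ i : Fin n, s i ≠ t i)
    (G : Matrix (Fin n) (Fin n) ℤ)
    (hupper : ∀ i j : Fin n, j < i → G i j = 0)
    (hdiag : ∀ i : Fin n, G i i = 1)
    (hGram : (incMatrix s t)ᵀ * incMatrix s t = G + Gᵀ) :
    (1 - incMatrix s t * G⁻¹ * (incMatrix s t)ᵀ)
        * (1 - incMatrix s t * (G⁻¹)ᵀ * (incMatrix s t)ᵀ) = 1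
    ∧ (1 - incMatrix s t * (G⁻¹)ᵀ * (incMatrix s t)ᵀ)
        * (1 - incMatrix s t * G⁻¹ * (incMatrix s t)ᵀ) = 1 := by
  have hdet : G.det = 1 := by
    rw [Matrix.det_of_upperTriangular (fun i j h => hupper i j h)]
    simp [hdiag]
  have hu : IsUnit G.det := by rw [hdet]; exact isUnit_one
  have hinv : G * G⁻¹ = 1 := Matrix.mul_nonsing_inv G hu
  have hinv' : G⁻¹ * G = 1 := Matrix.nonsing_inv_mul G hu
  constructor
  · exact lam_helper _ G hinv hinv' hGram
  · have hGram' : (incMatrix s t)ᵀ * incMatrix s t = Gᵀ + Gᵀᵀ := by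
      rw [hGram, Matrix.transpose_transpose, add_comm]
    have h1 : Gᵀ * (Gᵀ)⁻¹ = 1 := by
      rw [← Matrix.transpose_nonsing_inv, ← Matrix.transpose_mul, hinv', Matrix.transpose_one]
    have h2 : (Gᵀ)⁻¹ * Gᵀ = 1 := by
      rw [← Matrix.transpose_nonsing_inv, ← Matrix.transpose_mul, hinv, Matrix.transpose_one]
    have := lam_helper (incMatrix s t) Gᵀ h1 h2 hGram'
    rwa [← Matrix.transpose_nonsing_inv, Matrix.transpose_transpose] at this
end

section
/- Let Q be a connected loop-less quiver with m vertices and n arrows, and suppose Λ_Q := Id_m - I(Q)·Ǧ_Q^{-1}·I(Q)^T is the permutation matrix of a permutation ξ of the vertex set, whose cycle type is the partition π = (π_1,...,π_ℓ) of m. Then the characteristic polynomial of the Coxeter matrix Cox_Q = -Ǧ_Q^T Ǧ_Q^{-1} equals (x-1)^{n-m} · ∏_{a=1}^{ℓ}(x^{π_a} - 1). -/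
open Matrix Polynomial

/-!
Write `A = I(Q)ᵀ` and `B = I(Q)·Ǧ_Q⁻¹`. Since `Ǧ_Q + Ǧ_Qᵀ = I(Q)ᵀ·I(Q)`, the Coxeter matrix is
`1 - A·B` and `Λ_Q = 1 - B·A`, so Sylvester's identity `X^m·χ_{AB} = X^n·χ_{BA}`, shifted by `1`,
gives `(X-1)^m·χ_Cox = (X-1)^n·χ_Λ`. The characteristic polynomial of a permutation matrix splits
along the cycles of the permutation; for a single cycle of length `k` it is `X^k - 1`, because
`P^k = 1` while `e_x, P e_x, …, P^{k-1} e_x` are distinct basis vectors, so no nonzero polynomial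
of degree `< k` annihilates `P`. Finally `m ≤ n + 1` for a connected quiver (it has a spanning
tree), which lets us cancel `(X-1)^m`.
-/

open Equiv Equiv.Perm
open scoped Finset

theorem Equiv.Perm.subtypePerm_compl_support {α : Type*} [DecidableEq α] [Fintype α]
    (σ : Perm α) :
    (σ.subtypePerm (fun _ => not_congr apply_mem_support) : Perm {x // x ∉ σ.support}) = 1 := by
  ext ⟨x, hx⟩
  simpa using hx

namespace Matrix

variable {α β R : Type*} [DecidableEq α] [DecidableEq β]

theorem permMatrix_pow [Fintype α] [Semiring R] (σ : Perm α) (k : ℕ) :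
    (σ ^ k).permMatrix R = σ.permMatrix R ^ k := by
  induction k with
  | zero => simp
  | succ k ih => rw [pow_succ, permMatrix_mul, ih, pow_succ']

theorem permMatrix_sumCongr [Zero R] [One R] (σ : Perm α) (τ : Perm β) :
    (σ.sumCongr τ).permMatrix R = fromBlocks (σ.permMatrix R) 0 0 (τ.permMatrix R) := by
  ext (i | i) (j | j) <;> simp

theorem permMatrix_permCongr [Zero R] [One R] (e : α ≃ β) (σ : Perm α) :
    (e.permCongr σ).permMatrix R = reindex e e (σ.permMatrix R) := by
  ext i j
  simp [← e.eq_symm_apply]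

variable [Fintype α] [CommRing R]

theorem charpoly_permMatrix_subtypeCongr {p : α → Prop} [DecidablePred p]
    (ep : Perm {a // p a}) (en : Perm {a // ¬p a}) :
    ((ep.subtypeCongr en).permMatrix R).charpoly
      = (ep.permMatrix R).charpoly * (en.permMatrix R).charpoly := by
  rw [Perm.subtypeCongr, permMatrix_permCongr, charpoly_reindex, permMatrix_sumCongr,
    charpoly_fromBlocks_zero₁₂]

theorem charpoly_permMatrix_eq_mul_subtypePerm {p : α → Prop} [DecidablePred p] (σ : Perm α)
    (h : ∀ x, p (σ x) ↔ p x) :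
    (σ.permMatrix R).charpoly = ((σ.subtypePerm h).permMatrix R).charpoly
      * ((σ.subtypePerm (not_congr <| h ·) : Perm {a // ¬p a}).permMatrix R).charpoly := by
  have hσ : (σ.subtypePerm h).subtypeCongr (σ.subtypePerm (not_congr <| h ·)) = σ := by
    ext x
    by_cases hx : p x <;> simp [hx]
  conv_lhs => rw [← hσ]
  exact charpoly_permMatrix_subtypeCongr _ _

theorem charpoly_permMatrix_mul_of_disjoint {σ τ : Perm α} (h : σ.Disjoint τ) :
    (X - 1) ^ Fintype.card α * ((σ * τ).permMatrix R).charpoly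
      = (σ.permMatrix R).charpoly * (τ.permMatrix R).charpoly := by
  -- Split along `σ.support`: there `σ * τ` acts as `σ` and `τ` trivially, off it the reverse.
  have hσ (x : α) : σ x ∈ σ.support ↔ x ∈ σ.support := apply_mem_support
  have hτ (x : α) : τ x ∈ σ.support ↔ x ∈ σ.support := by
    rw [mem_support, mem_support, ← Perm.mul_apply, h.commute.eq, Perm.mul_apply,
      τ.injective.ne_iff]
  have hτ_on : τ.subtypePerm hτ = 1 := by
    ext ⟨x, hx⟩
    simpa using h.mem_imp hx
  rw [charpoly_permMatrix_eq_mul_subtypePerm σ hσ,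
    charpoly_permMatrix_eq_mul_subtypePerm τ hτ,
    charpoly_permMatrix_eq_mul_subtypePerm (σ * τ) fun x => (hσ _).trans (hτ x),
    ← subtypePerm_mul σ τ hσ hτ, ← subtypePerm_mul σ τ (not_congr <| hσ ·) (not_congr <| hτ ·),
    subtypePerm_compl_support, hτ_on]
  simp only [mul_one, one_mul, permMatrix_one, charpoly_one, Fintype.card_subtype_compl,
    Fintype.card_coe]
  rw [← pow_sub_mul_pow (X - 1 : R[X]) σ.support.card_le_univ]
  ring

theorem charpoly_permMatrix_of_isCycleOn_univ [Nonempty α] {σ : Perm α}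
    (hσ : σ.IsCycleOn Set.univ) :
    (σ.permMatrix R).charpoly = X ^ Fintype.card α - 1 := by
  nontriviality R
  obtain ⟨x⟩ := ‹Nonempty α›
  set k := Fintype.card α
  replace hσ : σ.IsCycleOn ((Finset.univ : Finset α) : Set α) := by rwa [Finset.coe_univ]
  have hpow {i j : ℕ} (hi : i < k) (hj : j < k) : (σ ^ i) x = (σ ^ j) x ↔ i = j := by
    rw [hσ.pow_apply_eq_pow_apply (Finset.mem_univ x), Finset.card_univ, Nat.ModEq,
      Nat.mod_eq_of_lt hi, Nat.mod_eq_of_lt hj]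
  have hk : σ ^ k = 1 := Equiv.ext fun y => hσ.pow_card_apply (Finset.mem_univ y)
  set q := (σ.permMatrix R).charpoly - (X ^ k - 1)
  have hq_deg : q.natDegree < k :=
    IsMonicOfDegree.natDegree_sub_lt Fintype.card_ne_zero
      ⟨charpoly_natDegree_eq_dim _, charpoly_monic _⟩
      ((isMonicOfDegree_X_pow R k).sub (by simpa using Fintype.card_pos))
  have hq_aeval : aeval (σ.permMatrix R) q = 0 := by
    simp [q, aeval_self_charpoly, ← permMatrix_pow, hk]
  rw [← sub_eq_zero]
  ext j
  change q.coeff j = 0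
  rcases lt_or_ge j k with hj | hj
  · have := congrFun₂ hq_aeval x ((σ ^ j) x)
    rw [aeval_eq_sum_range' hq_deg, Matrix.sum_apply,
      Finset.sum_eq_single_of_mem j (Finset.mem_range.2 hj)] at this
    · simpa [← permMatrix_pow] using this
    · intro i hi hij
      simp [← permMatrix_pow, hpow (Finset.mem_range.1 hi) hj, hij]
  · exact coeff_eq_zero_of_natDegree_lt (hq_deg.trans_le hj)

theorem charpoly_permMatrix_of_isCycle {σ : Perm α} (hσ : σ.IsCycle) :
    (σ.permMatrix R).charpoly = (X ^ #σ.support - 1) * (X - 1) ^ (Fintype.card α - #σ.support) := by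
  have hs (x : α) : σ x ∈ σ.support ↔ x ∈ σ.support := apply_mem_support
  have hcyc : (σ.subtypePerm hs).IsCycleOn Set.univ := by
    have := hσ.isCycleOn
    rw [← coe_support_eq_set_support] at this
    exact this.subtypePerm
  have : Nonempty σ.support := hσ.nonempty_support.to_subtype
  rw [charpoly_permMatrix_eq_mul_subtypePerm σ hs, subtypePerm_compl_support, permMatrix_one,
    charpoly_one, Fintype.card_subtype_compl, Fintype.card_coe]
  congr 1
  convert charpoly_permMatrix_of_isCycleOn_univ hcyc
  exact (Fintype.card_coe _).symm

theorem charpoly_permMatrix_eq_cycleType (σ : Perm α) :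
    (σ.permMatrix R).charpoly
      = (X - 1) ^ (Fintype.card α - #σ.support) * (σ.cycleType.map (X ^ · - 1)).prod := by
  induction σ using cycle_induction_on with
  | base_one => simp [charpoly_one]
  | base_cycles σ hσ =>
    rw [charpoly_permMatrix_of_isCycle hσ, hσ.cycleType, Multiset.map_singleton,
      Multiset.prod_singleton, mul_comm]
  | induction_disjoint σ τ hd _ ihσ ihτ =>
    set N := Fintype.card α
    have hle : #σ.support + #τ.support ≤ N := hd.card_support_mul ▸ (σ * τ).support.card_le_univ
    have hpow : (X - 1 : R[X]) ^ (N - #σ.support) * (X - 1) ^ (N - #τ.support)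
        = (X - 1) ^ N * (X - 1) ^ (N - (#σ.support + #τ.support)) := by
      rw [← pow_add, ← pow_add]
      congr 1
      omega
    apply ((monic_X_sub_C (1 : R)).pow N).isRegular.left
    simp only [map_one]
    rw [charpoly_permMatrix_mul_of_disjoint hd, ihσ, ihτ, hd.cycleType_mul, hd.card_support_mul,
      Multiset.map_add, Multiset.prod_add]
    linear_combination
      (σ.cycleType.map (X ^ · - 1)).prod * (τ.cycleType.map (X ^ · - 1)).prod * hpow

theorem charpoly_permMatrix (σ : Perm α) :
    (σ.permMatrix R).charpoly = (σ.partition.parts.map (X ^ · - 1)).prod := by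
  rw [charpoly_permMatrix_eq_cycleType, parts_partition, Multiset.map_add, Multiset.prod_add,
    Multiset.map_replicate, Multiset.prod_replicate, pow_one, mul_comm]

theorem charpoly_one_sub (M : Matrix α α R) : (1 - M).charpoly = (-M).charpoly.comp (X - 1) := by
  have h := charpoly_sub_scalar (-M) (-1)
  simp only [map_neg, map_one, sub_neg_eq_add, neg_add_eq_sub, ← sub_eq_add_neg] at h
  exact h

theorem charpoly_one_sub_mul_comm {m n : Type*} [Fintype m] [Fintype n] [DecidableEq m]
    [DecidableEq n] (A : Matrix m n R) (B : Matrix n m R) :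
    (X - 1) ^ Fintype.card n * (1 - A * B).charpoly
      = (X - 1) ^ Fintype.card m * (1 - B * A).charpoly := by
  have h := congrArg (·.comp (X - 1)) (charpoly_mul_comm' (-A) B)
  rwa [mul_comp, mul_comp, X_pow_comp, X_pow_comp, Matrix.neg_mul, Matrix.mul_neg,
    ← charpoly_one_sub, ← charpoly_one_sub] at h

end Matrix

theorem QuiverConnected.card_le_add_one {m n : ℕ} {s t : Fin n → Fin m}
    (h : QuiverConnected s t) : m ≤ n + 1 := by
  rcases Nat.eq_zero_or_pos m with rfl | hm
  · omega
  let G : SimpleGraph (Fin m) := SimpleGraph.fromRel fun a b => ∃ i, s i = a ∧ t i = b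
  have hG : G.Connected := by
    have : Nonempty (Fin m) := ⟨⟨0, hm⟩⟩
    refine ⟨fun v w => ?_⟩
    induction h v w with
    | refl => rfl
    | @tail b c _ hbc ih =>
      obtain ⟨i, hi⟩ := hbc
      by_cases hbc : b = c
      · exact hbc ▸ ih
      · refine ih.trans (SimpleGraph.Adj.reachable ?_)
        exact (SimpleGraph.fromRel_adj _ _ _).2 ⟨hbc, hi.imp (⟨i, ·⟩) (⟨i, ·⟩)⟩
  have hedges : G.edgeSet ⊆ Set.range fun i => s(s i, t i) := by
    intro e he
    induction e using Sym2.ind with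
    | h x y =>
      obtain ⟨-, ⟨i, rfl, rfl⟩ | ⟨i, rfl, rfl⟩⟩ :=
        (SimpleGraph.fromRel_adj _ _ _).1 (G.mem_edgeSet.1 he)
      exacts [⟨i, rfl⟩, ⟨i, Sym2.eq_swap⟩]
  calc m = Nat.card (Fin m) := (Nat.card_fin m).symm
    _ ≤ Nat.card G.edgeSet + 1 := hG.card_vert_le_card_edgeSet_add_one
    _ ≤ Nat.card (Set.range fun i => s(s i, t i)) + 1 := by
      gcongr; exact Nat.card_mono (Set.toFinite _) hedges
    _ ≤ n + 1 := by
      gcongr; exact (Finite.card_range_le _).trans (Nat.card_fin n).le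

theorem charpoly_coxeter_general {m n : ℕ} (s t : Fin n → Fin m)
    (hconn : QuiverConnected s t)
    (G : Matrix (Fin n) (Fin n) ℤ)
    (hupper : ∀ i j : Fin n, j < i → G i j = 0)
    (hdiag : ∀ i : Fin n, G i i = 1)
    (hGram : (incMatrix s t)ᵀ * incMatrix s t = G + Gᵀ)
    (ξ : Equiv.Perm (Fin m))
    (hΛ : 1 - incMatrix s t * G⁻¹ * (incMatrix s t)ᵀ
        = Matrix.of fun w v : Fin m => if w = ξ v then (1 : ℤ) else 0) :
    (X - 1) * (-(Gᵀ * G⁻¹)).charpoly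
      = (X - 1) ^ (n + 1 - m) * (ξ.partition.parts.map (fun a => (X : Polynomial ℤ) ^ a - 1)).prod := by
  set I := incMatrix s t
  have hG : IsUnit G.det := by
    rw [det_of_isUpperTriangular (hupper · ·), Finset.prod_eq_one fun i _ => hdiag i]
    exact isUnit_one
  have hCox : -(Gᵀ * G⁻¹) = 1 - Iᵀ * (I * G⁻¹) := by
    rw [← Matrix.mul_assoc, hGram, Matrix.add_mul, mul_nonsing_inv G hG]
    abel
  have hΛ' : 1 - I * G⁻¹ * Iᵀ = (ξ.permMatrix ℤ)ᵀ := by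
    rw [hΛ]
    ext w v
    simp [eq_comm]
  have hsylvester := charpoly_one_sub_mul_comm Iᵀ (I * G⁻¹)
  rw [← hCox, hΛ', charpoly_transpose, charpoly_permMatrix] at hsylvester
  simp only [Fintype.card_fin] at hsylvester
  apply ((monic_X_sub_C (1 : ℤ)).pow m).isRegular.left
  simp only [map_one]
  rw [mul_left_comm, hsylvester, ← mul_assoc, ← pow_succ', ← mul_assoc, ← pow_add,
    Nat.add_sub_cancel' hconn.card_le_add_one]

/-- if the Coxeter-Laplace matrix `Λ_Q = Id - I(Q)·Ǧ_Q⁻¹·I(Q)ᵀ` of a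
connected loop-less quiver is the permutation matrix of a permutation `ξ` of the vertices
with cycle type `π = (π_1,…,π_ℓ)`, then the characteristic polynomial of the Coxeter
matrix `Cox_Q = -Ǧ_Qᵀ·Ǧ_Q⁻¹` equals `(x-1)^{n-m}·∏_a (x^{π_a} - 1)`.
(Stated multiplied through by `(x-1)` so that the exponent `n+1-m ≥ 0` is a natural
number; this is the faithful form covering the tree case `n = m-1` as well.) -/
theorem charpoly_coxeter {m n : ℕ} (s t : Fin n → Fin m)
    (hloop : ∀ i : Fin n, s i ≠ t i) (hconn : QuiverConnected s t)
    (G : Matrix (Fin n) (Fin n) ℤ)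
    (hupper : ∀ i j : Fin n, j < i → G i j = 0)
    (hdiag : ∀ i : Fin n, G i i = 1)
    (hGram : (incMatrix s t)ᵀ * incMatrix s t = G + Gᵀ)
    (ξ : Equiv.Perm (Fin m))
    (hΛ : 1 - incMatrix s t * G⁻¹ * (incMatrix s t)ᵀ
        = Matrix.of fun w v : Fin m => if w = ξ v then (1 : ℤ) else 0) :
    (X - 1) * (-(Gᵀ * G⁻¹)).charpoly
      = (X - 1) ^ (n + 1 - m) * (ξ.partition.parts.map (fun a => (X : Polynomial ℤ) ^ a - 1)).prod :=
  charpoly_coxeter_general s t hconn G hupper hdiag hGram ξ hΛ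
end

section
/- Let Q be a connected loop-less quiver with n arrows and m vertices, with Coxeter matrix Cox_Q = -Ǧ_Q^T Ǧ_Q^{-1} and Coxeter-Laplace matrix Λ_Q = Id_m - I(Q)Ǧ_Q^{-1}I(Q)^T. Then for every integer k ≥ 1, Cox_Q^k = Id_n - I(Q)^T · ν_k(Λ_Q) · I(Q)Ǧ_Q^{-1}, where ν_k(x) = x^{k-1} + x^{k-2} + ⋯ + x + 1. -/
open Matrix Polynomial

/-- for every `k ≥ 1`,
`Cox_Q^k = Id - I(Q)ᵀ · ν_k(Λ_Q) · I(Q)·Ǧ_Q⁻¹` where `ν_k(x) = 1 + x + ⋯ + x^{k-1}`. -/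
theorem coxeter_pow {m n : ℕ} (s t : Fin n → Fin m)
    (hloop : ∀ i : Fin n, s i ≠ t i)
    (G : Matrix (Fin n) (Fin n) ℤ)
    (hupper : ∀ i j : Fin n, j < i → G i j = 0)
    (hdiag : ∀ i : Fin n, G i i = 1)
    (hGram : (incMatrix s t)ᵀ * incMatrix s t = G + Gᵀ)
    (k : ℕ) (hk : 1 ≤ k) :
    (-(Gᵀ * G⁻¹)) ^ k
      = 1 - (incMatrix s t)ᵀ
          * (∑ j ∈ Finset.range k, (1 - incMatrix s t * G⁻¹ * (incMatrix s t)ᵀ) ^ j)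
          * (incMatrix s t * G⁻¹) := by

  have hdet : G.det = 1 := by
    rw [Matrix.det_of_upperTriangular (fun i j h => hupper i j h)]
    simp [hdiag]
  have hinv : G * G⁻¹ = 1 := Matrix.mul_nonsing_inv G (by simp [hdet])
  set I := incMatrix s t with hI
  set Λ : Matrix (Fin m) (Fin m) ℤ := 1 - I * G⁻¹ * Iᵀ with hΛ
  have hcox : -(Gᵀ * G⁻¹) = 1 - Iᵀ * (I * G⁻¹) := by
    have h1 : Iᵀ * I * G⁻¹ = (G + Gᵀ) * G⁻¹ := by rw [hGram]
    rw [add_mul, hinv] at h1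
    rw [← Matrix.mul_assoc, h1]
    noncomm_ring
  induction k with
  | zero => omega
  | succ k ih =>
    rcases Nat.eq_zero_or_pos k with h0 | hpos
    · subst h0
      simpa [Matrix.mul_assoc] using hcox
    · have ih' := ih hpos
      set S : Matrix (Fin m) (Fin m) ℤ := ∑ j ∈ Finset.range k, Λ ^ j with hS
      have hcomm : Λ * S = S * Λ := by
        rw [hS, Finset.mul_sum, Finset.sum_mul]
        refine Finset.sum_congr rfl fun j _ => ?_
        rw [← pow_succ, ← pow_succ']
      have hS' : (∑ j ∈ Finset.range (k + 1), Λ ^ j) = S * Λ + 1 := by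
        rw [geom_sum_succ, hcomm]
      rw [pow_succ, ih', hcox, hS']
      rw [hΛ]
      simp only [Matrix.mul_sub, Matrix.sub_mul, Matrix.mul_add, Matrix.add_mul,
        Matrix.mul_one, Matrix.one_mul, Matrix.mul_assoc]
      abel
end

section
/- Let Q be a connected loop-less quiver whose Coxeter-Laplace matrix Λ_Q = Id_m - I(Q)Ǧ_Q^{-1}I(Q)^T is the permutation matrix of a permutation ξ of the m vertices with cycle type (π_1,...,π_ℓ). If ℓ = 1 (i.e., ξ is an m-cycle), then Cox_Q^{π_1} = Id, and π_1 is the minimal positive integer k with Cox_Q^k = Id. -/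
open Matrix Polynomial

/-!
Since `Iᵀ I = G + Gᵀ`, the Coxeter matrix intertwines as `Iᵀ Λ = Cox Iᵀ`, and iterating gives
`Cox^k = 1 - Iᵀ ν_k(Λ) I G⁻¹` with `ν_k(x) = 1 + x + ⋯ + x^(k-1)`; so `Cox^k = 1` iff
`Iᵀ ν_k(Λ) I = 0`. For `Λ = P(ξ)` the `(w, v)` entry of `ν_k(Λ)` counts the `j < k` with
`ξ^j v = w`, so every column of `ν_k(Λ)` sums to `k`.

If `ξ` is an `m`-cycle, `ν_m(Λ)` is the all-ones matrix, which `Iᵀ` kills. Conversely, if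
`Iᵀ ν_k(Λ) I = 0`, the columns of `ν_k(Λ) I` lie in the kernel of `Iᵀ`, hence are constant by
connectedness, and they sum to zero, so `ν_k(Λ) I = 0`. Thus the columns of `ν_k(Λ)` at the two
ends of each arrow agree, so all its columns agree; its diagonal entries are at least `1`, so the
column sum `k` is at least `m`.
-/

open Finset

namespace Equiv.Perm

variable {α : Type*}

theorem SameCycle.exists_pow_eq_of_lt_card [Fintype α] {f : Perm α} {x y : α}
    (h : f.SameCycle x y) : ∃ i < Fintype.card α, (f ^ i) x = y := by
  obtain ⟨j, rfl⟩ := h.exists_nat_pow_eq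
  have hpos : 0 < Function.minimalPeriod f x :=
    Function.minimalPeriod_pos_of_mem_periodicPts (f.injective.mem_periodicPts x)
  refine ⟨j % Function.minimalPeriod f x,
    (Nat.mod_lt _ hpos).trans_le Function.minimalPeriod_le_card, ?_⟩
  simp only [← iterate_eq_pow, Function.iterate_mod_minimalPeriod_eq]

variable [DecidableEq α]

theorem sum_card_filter_pow_apply_eq [Fintype α] (ξ : Perm α) (k : ℕ) (v : α) :
    ∑ w, #{j ∈ range k | (ξ ^ j) v = w} = k := by
  rw [← card_eq_sum_card_fiberwise (fun j _ => mem_univ ((ξ ^ j) v)), card_range]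

theorem one_le_card_filter_pow_apply {ξ : Perm α} {k : ℕ} {v w : α}
    (h : ∃ j < k, (ξ ^ j) v = w) : 1 ≤ #{j ∈ range k | (ξ ^ j) v = w} := by
  obtain ⟨j, hjk, hj⟩ := h
  exact card_pos.mpr ⟨j, mem_filter.mpr ⟨mem_range.mpr hjk, hj⟩⟩

theorem card_filter_pow_apply_eq_one [Fintype α] {ξ : Perm α} (hξ : ∀ v w, ξ.SameCycle v w)
    (v w : α) :
    #{j ∈ range (Fintype.card α) | (ξ ^ j) v = w} = 1 := by
  have hle : ∀ u, 1 ≤ #{j ∈ range (Fintype.card α) | (ξ ^ j) v = u} := fun u =>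
    one_le_card_filter_pow_apply (hξ v u).exists_pow_eq_of_lt_card
  refine (hle w).antisymm' (not_lt.mp fun hlt => ?_)
  have := sum_lt_sum (s := univ) (fun u _ => hle u) ⟨w, mem_univ w, hlt⟩
  simp [sum_card_filter_pow_apply_eq] at this

end Equiv.Perm

section PermMatrix

open Equiv

variable {α R : Type*} [Fintype α] [DecidableEq α] [Semiring R]

theorem of_ite_eq_apply_eq_permMatrixHom (ξ : Perm α) :
    (of fun w v => if w = ξ v then (1 : R) else 0) = permMatrixHom ξ := by
  ext w v
  simp [PEquiv.toMatrix_apply, Equiv.eq_symm_apply, eq_comm]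

theorem sum_pow_permMatrixHom_apply (ξ : Perm α) (k : ℕ) (w v : α) :
    (∑ j ∈ range k, (permMatrixHom ξ : Matrix α α R) ^ j) w v
      = #{j ∈ range k | (ξ ^ j) v = w} := by
  simp_rw [← map_pow, Matrix.sum_apply, permMatrixHom_apply, PEquiv.toMatrix_apply]
  simp only [Equiv.toPEquiv_apply, Option.mem_def, Option.some.injEq, Equiv.Perm.inv_eq_iff_eq,
    eq_comm (a := (ξ ^ _) v), sum_boole]

end PermMatrix

noncomputable section Coxeter

variable {R ι κ : Type*} [CommRing R] [Fintype κ] [DecidableEq κ]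

-- For `A = I(Q)` and `G = Ǧ_Q` these are the paper's `Cox_Q` and `Λ_Q`.
def coxeterMatrix (G : Matrix κ κ R) : Matrix κ κ R := -(Gᵀ * G⁻¹)

def coxeterLaplace [DecidableEq ι] (A : Matrix ι κ R) (G : Matrix κ κ R) : Matrix ι ι R :=
  1 - A * G⁻¹ * Aᵀ

variable [Fintype ι] {A : Matrix ι κ R} {G : Matrix κ κ R}

theorem coxeterMatrix_eq_one_sub (hG : IsUnit G.det) (hGram : Aᵀ * A = G + Gᵀ) :
    coxeterMatrix G = 1 - Aᵀ * A * G⁻¹ := by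
  rw [coxeterMatrix, hGram, Matrix.add_mul, mul_nonsing_inv G hG]
  abel

variable [DecidableEq ι]

theorem transpose_mul_coxeterLaplace (hG : IsUnit G.det) (hGram : Aᵀ * A = G + Gᵀ) :
    Aᵀ * coxeterLaplace A G = coxeterMatrix G * Aᵀ := by
  rw [coxeterLaplace, coxeterMatrix_eq_one_sub hG hGram, Matrix.mul_sub, Matrix.sub_mul]
  simp only [Matrix.mul_one, Matrix.one_mul, Matrix.mul_assoc]

theorem coxeterMatrix_pow (hG : IsUnit G.det) (hGram : Aᵀ * A = G + Gᵀ) (k : ℕ) :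
    coxeterMatrix G ^ k
      = 1 - Aᵀ * (∑ j ∈ range k, coxeterLaplace A G ^ j) * A * G⁻¹ := by
  induction k with
  | zero => simp
  | succ k ih =>
    rw [pow_succ', ih, geom_sum_succ, Matrix.mul_add, Matrix.mul_one, ← Matrix.mul_assoc,
      transpose_mul_coxeterLaplace hG hGram, coxeterMatrix_eq_one_sub hG hGram]
    simp only [Matrix.mul_sub, Matrix.sub_mul, Matrix.add_mul, Matrix.mul_one, Matrix.one_mul,
      Matrix.mul_assoc]
    abel

theorem coxeterMatrix_pow_eq_one_iff (hG : IsUnit G.det) (hGram : Aᵀ * A = G + Gᵀ) (k : ℕ) :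
    coxeterMatrix G ^ k = 1 ↔ Aᵀ * (∑ j ∈ range k, coxeterLaplace A G ^ j) * A = 0 := by
  rw [coxeterMatrix_pow hG hGram, sub_eq_self, IsUnit.mul_left_eq_zero]
  exact (isUnit_iff_isUnit_det _).mpr (isUnit_nonsing_inv_det G hG)

end Coxeter

section Quiver

variable {m n : ℕ} {s t : Fin n → Fin m}

theorem incMatrix_transpose_mul_apply {ι : Type*} (N : Matrix (Fin m) ι ℤ) (i : Fin n) (c : ι) :
    ((incMatrix s t)ᵀ * N) i c = N (s i) c - N (t i) c := by
  simp [Matrix.mul_apply, incMatrix, sub_mul, sum_sub_distrib]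

theorem mul_incMatrix_apply {ι : Type*} (N : Matrix ι (Fin m) ℤ) (v : ι) (i : Fin n) :
    (N * incMatrix s t) v i = N v (s i) - N v (t i) := by
  simp [Matrix.mul_apply, incMatrix, mul_sub, sum_sub_distrib]

theorem QuiverConnected.apply_eq_apply (hconn : QuiverConnected s t) {β : Type*} (x : Fin m → β)
    (hx : ∀ i, x (s i) = x (t i)) (v w : Fin m) : x v = x w := by
  induction hconn v w with
  | refl => rfl
  | tail _ hstep ih =>
    obtain ⟨i, ⟨rfl, rfl⟩ | ⟨rfl, rfl⟩⟩ := hstep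
    exacts [ih.trans (hx i), ih.trans (hx i).symm]

theorem QuiverConnected.eq_zero_of_incMatrix_transpose_mul_eq_zero (hconn : QuiverConnected s t)
    {ι : Type*} {N : Matrix (Fin m) ι ℤ} (hN : (incMatrix s t)ᵀ * N = 0)
    (hsum : ∀ c, ∑ v, N v c = 0) : N = 0 := by
  ext v c
  have hconst : ∀ w, N w c = N v c := fun w => hconn.apply_eq_apply (N · c) (fun i => by
    rw [← sub_eq_zero, ← incMatrix_transpose_mul_apply, hN, Matrix.zero_apply]) w v
  have := hsum c
  simp only [hconst, Finset.sum_const, Finset.card_univ, Fintype.card_fin, nsmul_eq_mul] at this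
  exact (mul_eq_zero.mp this).resolve_left (by have := v.pos; positivity)

end Quiver

section CoxeterNumber

open Equiv

variable {m n : ℕ} {s t : Fin n → Fin m} {G : Matrix (Fin n) (Fin n) ℤ} {ξ : Perm (Fin m)}

theorem coxeterMatrix_pow_eq_one_of_sameCycle (hG : IsUnit G.det)
    (hGram : (incMatrix s t)ᵀ * incMatrix s t = G + Gᵀ)
    (hΛ : coxeterLaplace (incMatrix s t) G = permMatrixHom ξ)
    (hξ : ∀ v w, ξ.SameCycle v w) : coxeterMatrix G ^ m = 1 := by
  have hcount := Perm.card_filter_pow_apply_eq_one hξ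
  rw [Fintype.card_fin] at hcount
  rw [coxeterMatrix_pow_eq_one_iff hG hGram, hΛ]
  suffices (incMatrix s t)ᵀ * ∑ j ∈ range m, (permMatrixHom ξ : Matrix (Fin m) (Fin m) ℤ) ^ j
      = 0 by
    rw [this, Matrix.zero_mul]
  ext i v
  rw [incMatrix_transpose_mul_apply, sum_pow_permMatrixHom_apply, sum_pow_permMatrixHom_apply,
    hcount, hcount, sub_self, Matrix.zero_apply]

theorem QuiverConnected.le_of_coxeterMatrix_pow_eq_one (hconn : QuiverConnected s t)
    (hG : IsUnit G.det) (hGram : (incMatrix s t)ᵀ * incMatrix s t = G + Gᵀ)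
    (hΛ : coxeterLaplace (incMatrix s t) G = permMatrixHom ξ)
    {k : ℕ} (hk : 0 < k) (hcox : coxeterMatrix G ^ k = 1) : m ≤ k := by
  set N : Matrix (Fin m) (Fin m) ℤ := ∑ j ∈ range k, permMatrixHom ξ ^ j
  have hN : ∀ w v, N w v = #{j ∈ range k | (ξ ^ j) v = w} := sum_pow_permMatrixHom_apply ξ k
  have hNI : N * incMatrix s t = 0 := by
    refine hconn.eq_zero_of_incMatrix_transpose_mul_eq_zero ?_ fun i => ?_
    · have := (coxeterMatrix_pow_eq_one_iff hG hGram k).mp hcox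
      rwa [hΛ, Matrix.mul_assoc] at this
    · simp only [mul_incMatrix_apply, sum_sub_distrib, hN, ← Nat.cast_sum,
        Perm.sum_card_filter_pow_apply_eq, sub_self]
  have hcol (u v w : Fin m) : #{j ∈ range k | (ξ ^ j) v = u} = #{j ∈ range k | (ξ ^ j) w = u} := by
    refine hconn.apply_eq_apply (fun v => #{j ∈ range k | (ξ ^ j) v = u}) (fun i => ?_) v w
    have := congr_fun₂ hNI u i
    rwa [mul_incMatrix_apply, Matrix.zero_apply, sub_eq_zero, hN, hN, Nat.cast_inj] at this
  rcases Nat.eq_zero_or_pos m with rfl | hm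
  · exact k.zero_le
  calc m = ∑ _w : Fin m, 1 := by simp
    _ ≤ ∑ w, #{j ∈ range k | (ξ ^ j) w = w} :=
      sum_le_sum fun w _ => Perm.one_le_card_filter_pow_apply ⟨0, hk, rfl⟩
    _ = ∑ w, #{j ∈ range k | (ξ ^ j) ⟨0, hm⟩ = w} := sum_congr rfl fun w _ => hcol w w _
    _ = k := ξ.sum_card_filter_pow_apply_eq k _

end CoxeterNumber

theorem coxeter_number_single_cycle_general {m n : ℕ} (s t : Fin n → Fin m)
    (hconn : QuiverConnected s t)
    (G : Matrix (Fin n) (Fin n) ℤ)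
    (hupper : ∀ i j : Fin n, j < i → G i j = 0)
    (hdiag : ∀ i : Fin n, G i i = 1)
    (hGram : (incMatrix s t)ᵀ * incMatrix s t = G + Gᵀ)
    (ξ : Equiv.Perm (Fin m))
    (hΛ : 1 - incMatrix s t * G⁻¹ * (incMatrix s t)ᵀ
        = Matrix.of fun w v : Fin m => if w = ξ v then (1 : ℤ) else 0)
    (hone : ∀ v w : Fin m, ξ.SameCycle v w) :
    (-(Gᵀ * G⁻¹)) ^ m = 1
    ∧ ∀ k : ℕ, 0 < k → k < m → (-(Gᵀ * G⁻¹)) ^ k ≠ 1 := by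
  rw [of_ite_eq_apply_eq_permMatrixHom] at hΛ
  have hG : IsUnit G.det := by
    rw [Matrix.det_of_isUpperTriangular hupper]
    simp [hdiag]
  exact ⟨coxeterMatrix_pow_eq_one_of_sameCycle hG hGram hΛ hone,
    fun k hk hkm hcox => hkm.not_ge (hconn.le_of_coxeterMatrix_pow_eq_one hG hGram hΛ hk hcox)⟩

/-- if the Coxeter-Laplace matrix of a connected loop-less quiver is the
permutation matrix of a permutation `ξ` which is a single `m`-cycle (one orbit, `ℓ = 1`,
so `π_1 = m`), then `Cox_Q^m = Id` and `m` is the minimal positive `k` with `Cox_Q^k = Id`. -/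
theorem coxeter_number_single_cycle {m n : ℕ} (hm : 0 < m) (s t : Fin n → Fin m)
    (hloop : ∀ i : Fin n, s i ≠ t i) (hconn : QuiverConnected s t)
    (G : Matrix (Fin n) (Fin n) ℤ)
    (hupper : ∀ i j : Fin n, j < i → G i j = 0)
    (hdiag : ∀ i : Fin n, G i i = 1)
    (hGram : (incMatrix s t)ᵀ * incMatrix s t = G + Gᵀ)
    (ξ : Equiv.Perm (Fin m))
    (hΛ : 1 - incMatrix s t * G⁻¹ * (incMatrix s t)ᵀ
        = Matrix.of fun w v : Fin m => if w = ξ v then (1 : ℤ) else 0)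
    (hone : ∀ v w : Fin m, ξ.SameCycle v w) :
    (-(Gᵀ * G⁻¹)) ^ m = 1
    ∧ ∀ k : ℕ, 0 < k → k < m → (-(Gᵀ * G⁻¹)) ^ k ≠ 1 :=
  coxeter_number_single_cycle_general s t hconn G hupper hdiag hGram ξ hΛ hone
end

section
/- Let Q be a connected loop-less quiver whose Coxeter-Laplace matrix Λ_Q is the permutation matrix of a permutation ξ of the vertices with cycle type (π_1,...,π_ℓ). Then the minimal positive integer k such that (Id - Cox_Q^k) is nilpotent (equivalently, such that (Id - Cox_Q^k)^2 = 0) equals lcm(π_1,...,π_ℓ). -/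
open Matrix Polynomial

/-!
Since `G + Gᵀ = IᵀI`, the Coxeter matrix is `-GᵀG⁻¹ = 1 - Iᵀ (I G⁻¹)`, while
`Λ = 1 - (I G⁻¹) Iᵀ`. For rectangular `A`, `B` the matrices `1 - (1 - AB)^k` and
`1 - (1 - BA)^k` factor as `A C` and `C A` with `C = B ∑_{i<k} (1 - AB)^i`, so one is nilpotent
iff the other is. Hence `Id - Cox^k` is nilpotent iff `Id - Λ^k = Id - P_{ξ^k}` is; a unipotent
permutation matrix over `ℤ` has trace `m`, so it is the identity. Thus the admissible `k` are the
multiples of the order of `ξ`, which is the lcm of its cycle type.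
-/

namespace Matrix

variable {m n R : Type*} [Fintype m] [Fintype n] [DecidableEq m] [DecidableEq n]

section Ring

variable [Ring R]

lemma mul_one_sub_mul_pow (A : Matrix m n R) (B : Matrix n m R) (k : ℕ) :
    B * (1 - A * B) ^ k = (1 - B * A) ^ k * B := by
  induction k with
  | zero => simp
  | succ k ih =>
    have hstep : B * (1 - A * B) = (1 - B * A) * B := by
      rw [Matrix.mul_sub, Matrix.sub_mul, Matrix.mul_one, Matrix.one_mul, Matrix.mul_assoc]
    rw [pow_succ, pow_succ, ← Matrix.mul_assoc, ih, Matrix.mul_assoc, hstep, Matrix.mul_assoc]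

lemma mul_pow_succ_eq (A : Matrix m n R) (B : Matrix n m R) (j : ℕ) :
    (A * B) ^ (j + 1) = A * (B * A) ^ j * B := by
  induction j with
  | zero => simp
  | succ j ih =>
    rw [pow_succ, ih, pow_succ, Matrix.mul_assoc, Matrix.mul_assoc, Matrix.mul_assoc,
      Matrix.mul_assoc, Matrix.mul_assoc]

lemma isNilpotent_mul_of_isNilpotent_mul_swap {A : Matrix m n R} {B : Matrix n m R}
    (h : IsNilpotent (B * A)) : IsNilpotent (A * B) := by
  obtain ⟨j, hj⟩ := h
  exact ⟨j + 1, by rw [mul_pow_succ_eq, hj, Matrix.mul_zero, Matrix.zero_mul]⟩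

lemma isNilpotent_mul_comm (A : Matrix m n R) (B : Matrix n m R) :
    IsNilpotent (A * B) ↔ IsNilpotent (B * A) :=
  ⟨isNilpotent_mul_of_isNilpotent_mul_swap, isNilpotent_mul_of_isNilpotent_mul_swap⟩

lemma isNilpotent_one_sub_one_sub_mul_pow_iff (A : Matrix m n R) (B : Matrix n m R) (k : ℕ) :
    IsNilpotent (1 - (1 - A * B) ^ k) ↔ IsNilpotent (1 - (1 - B * A) ^ k) := by
  obtain ⟨S, hS⟩ : ∃ S, S = ∑ i ∈ Finset.range k, (1 - A * B) ^ i := ⟨_, rfl⟩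
  have hAB : 1 - (1 - A * B) ^ k = A * (B * S) := by
    rw [hS, ← mul_neg_geom_sum, sub_sub_cancel, Matrix.mul_assoc]
  have hBA : 1 - (1 - B * A) ^ k = B * S * A := by
    rw [hS, Matrix.mul_sum, Finset.sum_congr rfl fun i _ => mul_one_sub_mul_pow A B i,
      ← Matrix.sum_mul, Matrix.mul_assoc, ← geom_sum_mul_neg, sub_sub_cancel]
  rw [hAB, hBA, isNilpotent_mul_comm]

end Ring

lemma isNilpotent_one_sub_permMatrix_iff [CommRing R] [IsReduced R] [CharZero R]
    (σ : Equiv.Perm n) : IsNilpotent (1 - σ.permMatrix R) ↔ σ = 1 := by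
  refine ⟨fun h => ?_, fun h => by simp [h]⟩
  have htrace : (Fintype.card n : R) = (Function.fixedPoints σ).ncard := by
    rw [← trace_one, ← trace_permutation, ← sub_eq_zero, ← trace_sub]
    exact (isNilpotent_trace_of_isNilpotent h).eq_zero
  have hfix : Function.fixedPoints σ = Set.univ := by
    by_contra hne
    have := Set.ncard_lt_card hne
    rw [Nat.card_eq_fintype_card] at this
    exact this.ne (by exact_mod_cast htrace.symm)
  exact Equiv.ext fun v => (Set.ext_iff.mp hfix v).mpr trivial

omit [DecidableEq m] in
lemma neg_transpose_mul_inv_eq_one_sub [CommRing R] {G : Matrix n n R} (hG : IsUnit G.det)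
    {W : Matrix m n R} (hW : Wᵀ * W = G + Gᵀ) : -(Gᵀ * G⁻¹) = 1 - Wᵀ * (W * G⁻¹) := by
  rw [← Matrix.mul_assoc, hW, Matrix.add_mul, mul_nonsing_inv G hG]
  abel

end Matrix

lemma Equiv.Perm.lcm_parts_partition {α : Type*} [Fintype α] [DecidableEq α]
    (σ : Equiv.Perm α) : σ.partition.parts.lcm = orderOf σ := by
  have hones : (Multiset.replicate (Fintype.card α - σ.support.card) 1).lcm = 1 :=
    Nat.dvd_one.mp <| Multiset.lcm_dvd.mpr fun x hx =>
      (Multiset.eq_of_mem_replicate hx).symm ▸ dvd_rfl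
  rw [parts_partition, Multiset.lcm_add, lcm_cycleType, hones, lcm_one_right, normalize_eq]

theorem reduced_coxeter_number_general {m n : ℕ} (s t : Fin n → Fin m)
    (G : Matrix (Fin n) (Fin n) ℤ)
    (hupper : ∀ i j : Fin n, j < i → G i j = 0)
    (hdiag : ∀ i : Fin n, G i i = 1)
    (hGram : (incMatrix s t)ᵀ * incMatrix s t = G + Gᵀ)
    (ξ : Equiv.Perm (Fin m))
    (hΛ : 1 - incMatrix s t * G⁻¹ * (incMatrix s t)ᵀ
        = Matrix.of fun w v : Fin m => if w = ξ v then (1 : ℤ) else 0) :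
    IsNilpotent (1 - (-(Gᵀ * G⁻¹)) ^ (ξ.partition.parts.lcm))
    ∧ ∀ k : ℕ, 0 < k → IsNilpotent (1 - (-(Gᵀ * G⁻¹)) ^ k) →
        ξ.partition.parts.lcm ≤ k := by
  have hdet : IsUnit G.det := by
    rw [det_of_isUpperTriangular hupper]
    simp only [hdiag, Finset.prod_const_one, isUnit_one]
  have hΛperm : 1 - incMatrix s t * G⁻¹ * (incMatrix s t)ᵀ = permMatrixHom (R := ℤ) ξ := by
    rw [hΛ]
    ext w v
    simp [PEquiv.toMatrix_apply, Equiv.toPEquiv_apply, Equiv.eq_symm_apply, eq_comm]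
  have key : ∀ k, IsNilpotent (1 - (-(Gᵀ * G⁻¹)) ^ k) ↔ ξ ^ k = 1 := fun k => by
    rw [neg_transpose_mul_inv_eq_one_sub hdet hGram, isNilpotent_one_sub_one_sub_mul_pow_iff,
      hΛperm, ← map_pow, permMatrixHom_apply, isNilpotent_one_sub_permMatrix_iff, inv_eq_one]
  rw [ξ.lcm_parts_partition]
  exact ⟨(key _).2 (pow_orderOf_eq_one ξ),
    fun k hk h => Nat.le_of_dvd hk (orderOf_dvd_of_pow_eq_one ((key k).1 h))⟩

/-- if the Coxeter-Laplace matrix of a connected loop-less quiver is the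
permutation matrix of a permutation `ξ` with cycle type `(π_1,…,π_ℓ)`, then the minimal
positive `k` such that `Id - Cox_Q^k` is nilpotent equals `lcm(π_1,…,π_ℓ)`. -/
theorem reduced_coxeter_number {m n : ℕ} (hm : 0 < m) (s t : Fin n → Fin m)
    (hloop : ∀ i : Fin n, s i ≠ t i) (hconn : QuiverConnected s t)
    (G : Matrix (Fin n) (Fin n) ℤ)
    (hupper : ∀ i j : Fin n, j < i → G i j = 0)
    (hdiag : ∀ i : Fin n, G i i = 1)
    (hGram : (incMatrix s t)ᵀ * incMatrix s t = G + Gᵀ)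
    (ξ : Equiv.Perm (Fin m))
    (hΛ : 1 - incMatrix s t * G⁻¹ * (incMatrix s t)ᵀ
        = Matrix.of fun w v : Fin m => if w = ξ v then (1 : ℤ) else 0) :
    IsNilpotent (1 - (-(Gᵀ * G⁻¹)) ^ (ξ.partition.parts.lcm))
    ∧ ∀ k : ℕ, 0 < k → IsNilpotent (1 - (-(Gᵀ * G⁻¹)) ^ k) →
        ξ.partition.parts.lcm ≤ k :=
  reduced_coxeter_number_general s t G hupper hdiag hGram ξ hΛ
end

section
/- Let L be the linear quiver on m vertices v_1 → v_2 → ⋯ → v_m, with arrow i going from v_i to v_{i+1} (arrows ordered 1 < 2 < ⋯ < m-1). Then the permutation of vertices ξ⁻_L determined by structural minimally decreasing walks satisfies ξ⁻_L(v_t) = v_{t+1} for t < m and ξ⁻_L(v_m) = v_1; in particular ξ⁻_L is an m-cycle. -/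
open Matrix Polynomial

/-! On the linear quiver the vertex `v` is incident only to the arrows `v - 1` and `v`. From
`v < m - 1` the structural walk crosses arrow `v` up to `v + 1`, where no smaller arrow is left,
so it stops there. From the last vertex it crosses the arrows `m - 2, m - 3, …, 0` in turn and
ends at vertex `0`. -/

section MinimallyDecreasingWalk

variable {m n : ℕ} (s t : Fin n → Fin m)

theorem xiAux_eq_self_of_forall_le {b : ℕ} {v : Fin m}
    (h : ∀ i : Fin n, s i = v ∨ t i = v → b ≤ i) : xiAux s t b v = v := by
  rw [xiAux, dif_neg]
  rintro ⟨i, hi⟩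
  simp only [Finset.mem_filter, Finset.mem_univ, true_and] at hi
  exact absurd (h i hi.1) (not_le.mpr hi.2)

theorem xiAux_eq_of_isMax {b : ℕ} {v : Fin m} {i : Fin n} (hi : s i = v ∨ t i = v)
    (hib : (i : ℕ) < b) (hmax : ∀ j : Fin n, s j = v ∨ t j = v → (j : ℕ) < b → j ≤ i) :
    xiAux s t b v = xiAux s t i (otherEnd s t i v) := by
  have hmem : i ∈ Finset.univ.filter (fun j : Fin n => (s j = v ∨ t j = v) ∧ (j : ℕ) < b) := by
    simpa using ⟨hi, hib⟩
  have hmax' : (Finset.univ.filter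
      (fun j : Fin n => (s j = v ∨ t j = v) ∧ (j : ℕ) < b)).max' ⟨i, hmem⟩ = i := by
    refine le_antisymm (Finset.max'_le _ _ _ fun j hj => ?_) (Finset.le_max' _ _ hmem)
    simp only [Finset.mem_filter, Finset.mem_univ, true_and] at hj
    exact hmax j hj.1 hj.2
  rw [xiAux, dif_pos ⟨i, hmem⟩, hmax']

end MinimallyDecreasingWalk

section LinearQuiver

def linSource (m : ℕ) (i : Fin (m - 1)) : Fin m := ⟨i, i.isLt.trans_le (Nat.sub_le m 1)⟩

def linTarget (m : ℕ) (i : Fin (m - 1)) : Fin m := ⟨i + 1, Nat.add_lt_of_lt_sub i.isLt⟩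

variable {m : ℕ}

theorem linSource_eq_or_linTarget_eq_iff {i : Fin (m - 1)} {v : Fin m} :
    (linSource m i = v ∨ linTarget m i = v) ↔ (i : ℕ) = v ∨ (i : ℕ) + 1 = v := by
  simp [linSource, linTarget, Fin.ext_iff]

theorem xiAux_linear_self (b : ℕ) (hb : b < m) :
    xiAux (linSource m) (linTarget m) b ⟨b, hb⟩ = ⟨0, by omega⟩ := by
  induction b with
  | zero => exact xiAux_eq_self_of_forall_le _ _ fun i _ => Nat.zero_le i
  | succ b ih =>
    have hmax (j : Fin (m - 1)) (hj : linSource m j = ⟨b + 1, hb⟩ ∨ linTarget m j = ⟨b + 1, hb⟩)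
        (hjb : (j : ℕ) < b + 1) : j ≤ ⟨b, by omega⟩ := by
      rw [linSource_eq_or_linTarget_eq_iff] at hj
      simp only [Fin.le_def]
      omega
    have hdown : otherEnd (linSource m) (linTarget m) ⟨b, by omega⟩ ⟨b + 1, hb⟩ = ⟨b, by omega⟩ :=
      if_neg (by simp [linSource])
    rw [xiAux_eq_of_isMax _ _ (i := ⟨b, by omega⟩) (by simp [linTarget]) (by simp) hmax, hdown]
    exact ih (by omega)

theorem xiDown_linear_of_lt (v : Fin m) (hv : (v : ℕ) + 1 < m) :
    xiDown (linSource m) (linTarget m) v = ⟨v + 1, hv⟩ := by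
  have hmax (j : Fin (m - 1)) (hj : linSource m j = v ∨ linTarget m j = v) (_ : (j : ℕ) < m - 1) :
      j ≤ ⟨v, by omega⟩ := by
    rw [linSource_eq_or_linTarget_eq_iff] at hj
    simp only [Fin.le_def]
    omega
  have hup : otherEnd (linSource m) (linTarget m) ⟨v, by omega⟩ v = ⟨v + 1, hv⟩ :=
    if_pos rfl
  rw [xiDown, xiAux_eq_of_isMax _ _ (v := v) (i := ⟨v, by omega⟩) (Or.inl rfl) (by simp; omega)
    hmax, hup]
  refine xiAux_eq_self_of_forall_le _ _ fun j hj => ?_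
  rw [linSource_eq_or_linTarget_eq_iff] at hj
  dsimp only at hj ⊢
  omega

theorem xiDown_linear_last (v : Fin m) (hv : (v : ℕ) + 1 = m) :
    xiDown (linSource m) (linTarget m) v = ⟨0, by omega⟩ := by
  rcases Nat.lt_or_ge m 2 with hm | hm
  · have hv0 : v = ⟨0, by omega⟩ := Fin.ext (by omega)
    exact hv0 ▸ xiAux_eq_self_of_forall_le _ _ fun i _ => by omega
  · have hdown : otherEnd (linSource m) (linTarget m) ⟨m - 2, by omega⟩ v = ⟨m - 2, by omega⟩ :=
      if_neg (by simp [linSource, Fin.ext_iff]; omega)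
    rw [xiDown, xiAux_eq_of_isMax _ _ (i := ⟨m - 2, by omega⟩)
      (Or.inr (Fin.ext (by simp [linTarget]; omega))) (by simp; omega)
      fun j _ _ => by simp only [Fin.le_def]; omega, hdown]
    exact xiAux_linear_self (m - 2) (by omega)

theorem xiDown_linear_val (v : Fin m) :
    (xiDown (linSource m) (linTarget m) v : ℕ) = (v + 1) % m := by
  rcases Nat.lt_or_ge ((v : ℕ) + 1) m with hv | hv
  · rw [xiDown_linear_of_lt v hv, Nat.mod_eq_of_lt hv]
  · have hv : (v : ℕ) + 1 = m := by omega
    rw [xiDown_linear_last v hv, hv, Nat.mod_self]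

end LinearQuiver

theorem iterate_val_eq_add_mod {m : ℕ} {f : Fin m → Fin m} (hf : ∀ v, (f v : ℕ) = (v + 1) % m)
    (k : ℕ) (v : Fin m) : (f^[k] v : ℕ) = (v + k) % m := by
  induction k generalizing v with
  | zero => exact (Nat.mod_eq_of_lt v.isLt).symm
  | succ k ih => rw [Function.iterate_succ_apply, ih, hf, Nat.mod_add_mod, Nat.add_right_comm,
      Nat.add_assoc]

theorem exists_iterate_eq_of_val_eq_succ_mod {m : ℕ} {f : Fin m → Fin m}
    (hf : ∀ v, (f v : ℕ) = (v + 1) % m) (v w : Fin m) : ∃ k, f^[k] v = w := by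
  refine ⟨m - v + w, Fin.ext ?_⟩
  rw [iterate_val_eq_add_mod hf, show (v : ℕ) + (m - v + w) = w + m by omega, Nat.add_mod_right,
    Nat.mod_eq_of_lt w.isLt]

/-- for the linear quiver `v_1 → v_2 → ⋯ → v_m` (arrow `i` from `v_i` to
`v_{i+1}`, ordered increasingly), the permutation `ξ⁻` sends `v_t ↦ v_{t+1}` (`t < m`)
and `v_m ↦ v_1`; in particular `ξ⁻` is an `m`-cycle (a single orbit). -/
theorem xiDown_linear_quiver (m : ℕ) :
    (∀ v : Fin m,
        (xiDown (fun i : Fin (m - 1) => (⟨i.val, by omega⟩ : Fin m))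
            (fun i : Fin (m - 1) => (⟨i.val + 1, by omega⟩ : Fin m)) v).val
          = (v.val + 1) % m)
    ∧ ∀ v w : Fin m, ∃ k : ℕ,
        (xiDown (fun i : Fin (m - 1) => (⟨i.val, by omega⟩ : Fin m))
            (fun i : Fin (m - 1) => (⟨i.val + 1, by omega⟩ : Fin m)))^[k] v = w :=
  ⟨xiDown_linear_val, exists_iterate_eq_of_val_eq_succ_mod xiDown_linear_val⟩
end

section
/- Let Q be a loop-less quiver (with totally ordered arrows) and let ξ⁻_Q and ξ⁺_Q be the vertex maps defined by ξ⁻_Q(v) = end of the structural minimally decreasing walk starting at v, and ξ⁺_Q(v) = end of the structural minimally increasing walk starting at v. Then ξ⁺_Q(ξ⁻_Q(v)) = v for every vertex v; hence ξ⁻_Q is a permutation of the vertex set with inverse ξ⁺_Q. -/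
open Matrix Polynomial

lemma otherEnd_incident {m n : ℕ} (s t : Fin n → Fin m) (i : Fin n) (v : Fin m) :
    s i = otherEnd s t i v ∨ t i = otherEnd s t i v := by
  unfold otherEnd; split <;> simp

lemma otherEnd_otherEnd {m n : ℕ} (s t : Fin n → Fin m) (i : Fin n) (v : Fin m)
    (h : s i = v ∨ t i = v) (hl : s i ≠ t i) :
    otherEnd s t i (otherEnd s t i v) = v := by
  unfold otherEnd
  rcases h with h | h <;> split_ifs <;> simp_all

lemma xiAuxUp_congr {m n : ℕ} (s t : Fin n → Fin m) (b c : ℕ) (v : Fin m)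
    (h : Finset.univ.filter (fun i : Fin n => (s i = v ∨ t i = v) ∧ c ≤ i.val)
       = Finset.univ.filter (fun i : Fin n => (s i = v ∨ t i = v) ∧ b ≤ i.val)) :
    xiAuxUp s t c v = xiAuxUp s t b v := by
  conv_lhs => rw [xiAuxUp]
  conv_rhs => rw [xiAuxUp]
  simp only [h]

lemma xiAuxUp_xiAux {m n : ℕ} (s t : Fin n → Fin m)
    (hloop : ∀ i : Fin n, s i ≠ t i) :
    ∀ b (v : Fin m), xiAuxUp s t 0 (xiAux s t b v) = xiAuxUp s t b v := by
  intro b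
  induction b using Nat.strong_induction_on with
  | _ b IH =>
    intro v
    rw [xiAux]
    split_ifs with h
    · set F := Finset.univ.filter (fun i : Fin n => (s i = v ∨ t i = v) ∧ i.val < b) with hF
      set j := F.max' h with hj
      have hjF : j ∈ F := F.max'_mem h
      have hjmem := Finset.mem_filter.mp hjF
      rw [IH j.val hjmem.2.2]
      set w := otherEnd s t j v with hw
      -- unfold the increasing walk at w with bound j.val
      rw [xiAuxUp]
      set G := Finset.univ.filter (fun i : Fin n => (s i = w ∨ t i = w) ∧ j.val ≤ i.val) with hG
      have hjG : j ∈ G := by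
        simp only [hG, Finset.mem_filter, Finset.mem_univ, true_and]
        exact ⟨otherEnd_incident s t j v, le_refl _⟩
      have hGne : G.Nonempty := ⟨j, hjG⟩
      have hmin : G.min' hGne = j := by
        refine le_antisymm (G.min'_le j hjG) ?_
        apply Finset.le_min'
        intro y hy
        exact (Finset.mem_filter.mp hy).2.2
      rw [dif_pos hGne, hmin]
      rw [otherEnd_otherEnd s t j v hjmem.2.1 (hloop j)]
      apply xiAuxUp_congr
      ext i
      simp only [Finset.mem_filter, Finset.mem_univ, true_and, and_congr_right_iff]
      intro hi
      constructor
      · intro hji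
        by_contra hib
        push_neg at hib
        have hiF : i ∈ F := by
          simp only [hF, Finset.mem_filter, Finset.mem_univ, true_and]
          exact ⟨hi, hib⟩
        have := F.le_max' i hiF
        rw [← hj] at this
        have : i.val ≤ j.val := this
        omega
      · intro hbi
        have := hjmem.2.2
        omega
    · apply xiAuxUp_congr
      ext i
      simp only [Finset.mem_filter, Finset.mem_univ, true_and, and_congr_right_iff]
      intro hi
      simp only [Nat.zero_le, true_iff]
      by_contra hib
      push_neg at hib
      exact h ⟨i, by simp only [Finset.mem_filter, Finset.mem_univ, true_and]; exact ⟨hi, hib⟩⟩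

lemma xiAuxUp_n {m n : ℕ} (s t : Fin n → Fin m) (v : Fin m) :
    xiAuxUp s t n v = v := by
  rw [xiAuxUp]
  rw [dif_neg]
  rintro ⟨i, hi⟩
  have := (Finset.mem_filter.mp hi).2.2
  omega

/-- for a loop-less quiver, `ξ⁺(ξ⁻(v)) = v` for every vertex `v`; hence
`ξ⁻` is a permutation of the vertex set (with inverse `ξ⁺`). -/
theorem xiUp_xiDown {m n : ℕ} (s t : Fin n → Fin m)
    (hloop : ∀ i : Fin n, s i ≠ t i) :
    (∀ v : Fin m, xiUp s t (xiDown s t v) = v)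
    ∧ Function.Bijective (xiDown s t) := by
  have key : ∀ v : Fin m, xiUp s t (xiDown s t v) = v := by
    intro v
    unfold xiUp xiDown
    rw [xiAuxUp_xiAux s t hloop n v, xiAuxUp_n]
  refine ⟨key, ?_⟩
  have hinj : Function.Injective (xiDown s t) :=
    Function.LeftInverse.injective key
  exact Finite.injective_iff_bijective.mp hinj
end

section
/- Let Q be a loop-less quiver with arrows totally ordered, and let Q' be the quiver obtained from Q by deleting the maximal arrow i. Then the vertex permutations satisfy ξ⁻_Q = ξ⁻_{Q'} ∘ [s(i), t(i)], where [s(i), t(i)] is the transposition swapping the source and target of i. Consequently, the number of cycles of ξ⁻_Q differs from that of ξ⁻_{Q'} by exactly one. -/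
open Matrix Polynomial

/-! The walk from `v` crosses the maximal arrow `i` first if `v` is an endpoint of `i`, and never
otherwise; after that it only uses arrows below `i`, so it is the walk of `Q'` starting at
`swap (s i) (t i) v`.

For `τ = π * swap a b` with `a ≠ b`, the signs of `τ` and `π` differ, so their numbers of cycles
have different parities. Every `τ`-cycle lies in a single class of the partition obtained from the
`π`-cycles by merging the cycles of `a` and `b`, so `τ` has at most one cycle fewer than `π`;
by symmetry the two counts differ by exactly one. -/

section DecreasingWalk

variable {m n : ℕ}

def incidentBelow (s t : Fin n → Fin m) (b : ℕ) (v : Fin m) : Finset (Fin n) :=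
  Finset.univ.filter fun i => (s i = v ∨ t i = v) ∧ i.val < b

@[simp]
lemma mem_incidentBelow {s t : Fin n → Fin m} {b : ℕ} {v : Fin m} {i : Fin n} :
    i ∈ incidentBelow s t b v ↔ (s i = v ∨ t i = v) ∧ i.val < b := by
  simp [incidentBelow]

lemma xiAux_eq_dite (s t : Fin n → Fin m) (b : ℕ) (v : Fin m) :
    xiAux s t b v =
      if h : (incidentBelow s t b v).Nonempty then
        xiAux s t ((incidentBelow s t b v).max' h).val
          (otherEnd s t ((incidentBelow s t b v).max' h) v)
      else v := by
  rw [xiAux]; rfl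

lemma xiAux_of_isGreatest {s t : Fin n → Fin m} {b : ℕ} {v : Fin m} {i : Fin n}
    (hi : IsGreatest (incidentBelow s t b v : Set (Fin n)) i) :
    xiAux s t b v = xiAux s t i (otherEnd s t i v) := by
  have hne : (incidentBelow s t b v).Nonempty := ⟨i, hi.1⟩
  rw [xiAux_eq_dite, dif_pos hne, ((incidentBelow s t b v).isGreatest_max' hne).unique hi]

lemma xiAux_of_incidentBelow_eq_empty {s t : Fin n → Fin m} {b : ℕ} {v : Fin m}
    (h : incidentBelow s t b v = ∅) : xiAux s t b v = v := by
  rw [xiAux_eq_dite, dif_neg (Finset.not_nonempty_iff_eq_empty.mpr h)]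

lemma xiAux_congr_bound {s t : Fin n → Fin m} {b b' : ℕ} {v : Fin m}
    (h : incidentBelow s t b v = incidentBelow s t b' v) : xiAux s t b v = xiAux s t b' v := by
  rw [xiAux_eq_dite, xiAux_eq_dite s t b', h]

lemma xiAux_comp_castLE {n' : ℕ} (hn : n ≤ n') (s t : Fin n' → Fin m) {b : ℕ} (hb : b ≤ n)
    (v : Fin m) : xiAux s t b v = xiAux (s ∘ Fin.castLE hn) (t ∘ Fin.castLE hn) b v := by
  induction b using Nat.strong_induction_on generalizing v with
  | _ b ih =>
  rcases (incidentBelow s t b v).eq_empty_or_nonempty with h | h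
  · have h' : incidentBelow (s ∘ Fin.castLE hn) (t ∘ Fin.castLE hn) b v = ∅ :=
      Finset.eq_empty_of_forall_notMem fun j hj =>
        Finset.notMem_empty (Fin.castLE hn j) (h ▸ by simpa using hj)
    rw [xiAux_of_incidentBelow_eq_empty h, xiAux_of_incidentBelow_eq_empty h']
  · set i := (incidentBelow s t b v).max' h
    have hi : IsGreatest (incidentBelow s t b v : Set (Fin n')) i := Finset.isGreatest_max' _ h
    have hib : i.val < b := (mem_incidentBelow.mp hi.1).2
    let i' : Fin n := ⟨i, by omega⟩
    have hi' : IsGreatest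
        (incidentBelow (s ∘ Fin.castLE hn) (t ∘ Fin.castLE hn) b v : Set (Fin n)) i' :=
      ⟨by simpa [show Fin.castLE hn i' = i from rfl] using hi.1, fun j hj =>
        Fin.le_def.mpr <| Fin.le_def.mp <|
          hi.2 (show Fin.castLE hn j ∈ incidentBelow s t b v by simpa using hj)⟩
    rw [xiAux_of_isGreatest hi, xiAux_of_isGreatest hi']
    exact ih i hib (by omega) _

lemma otherEnd_eq_swap {s t : Fin n → Fin m} {i : Fin n} {v : Fin m} (hst : s i ≠ t i)
    (hv : s i = v ∨ t i = v) : otherEnd s t i v = Equiv.swap (s i) (t i) v := by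
  rcases hv with rfl | rfl
  · simp [otherEnd]
  · simp [otherEnd, hst]

theorem xiDown_eq_xiDown_castSucc_swap (s t : Fin (n + 1) → Fin m)
    (hst : s (Fin.last n) ≠ t (Fin.last n)) (v : Fin m) :
    xiDown s t v = xiDown (s ∘ Fin.castSucc) (t ∘ Fin.castSucc)
      (Equiv.swap (s (Fin.last n)) (t (Fin.last n)) v) := by
  have hrestrict := xiAux_comp_castLE (Nat.le_succ n) s t le_rfl
  by_cases hv : s (Fin.last n) = v ∨ t (Fin.last n) = v
  · have hlast : IsGreatest (incidentBelow s t (n + 1) v : Set (Fin (n + 1))) (Fin.last n) :=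
      ⟨by simpa using hv, fun j _ => Fin.le_last j⟩
    rw [xiDown, xiAux_of_isGreatest hlast, ← otherEnd_eq_swap hst hv]
    exact hrestrict _
  · have hbelow : incidentBelow s t (n + 1) v = incidentBelow s t n v := by
      ext j
      simp only [mem_incidentBelow]
      exact and_congr_right fun hj =>
        ⟨fun _ => Fin.val_lt_last fun hlast => hv (hlast ▸ hj), fun hjn => by omega⟩
    rw [Equiv.swap_apply_of_ne_of_ne (fun h => hv (.inl h.symm)) (fun h => hv (.inr h.symm)),
      xiDown, xiAux_congr_bound hbelow, hrestrict]
    rfl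

end DecreasingWalk

lemma Finite.card_le_card_add_one_of_insert_range_eq_univ {β γ : Type*} [Finite β]
    [Finite γ] (f : β → γ) (c : γ) (h : insert c (Set.range f) = Set.univ) :
    Nat.card γ ≤ Nat.card β + 1 :=
  calc Nat.card γ = (insert c (Set.range f)).ncard := by rw [h, Set.ncard_univ]
    _ ≤ (Set.range f).ncard + 1 := Set.ncard_insert_le _ _
    _ ≤ Nat.card β + 1 := by
      rw [← Nat.card_coe_set_eq]; gcongr; exact Finite.card_range_le f

open Finset

namespace Equiv.Perm

lemma SameCycle.apply_eq_of_comp_eq {α β : Type*} {τ : Perm α} {g : α → β}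
    (hg : g ∘ τ = g) {x y : α} (hxy : τ.SameCycle x y) : g x = g y := by
  obtain ⟨k, rfl⟩ := hxy
  induction k using Int.induction_on generalizing x with
  | zero => rfl
  | succ k ih => rw [_root_.zpow_add_one, mul_apply, ← ih]; exact (congrFun hg x).symm
  | pred k ih =>
    rw [_root_.zpow_sub_one, mul_apply, ← ih, ← congrFun hg (τ⁻¹ x), Function.comp_apply,
      ← mul_apply, mul_inv_cancel, one_apply]

variable {α : Type*} [Fintype α] [DecidableEq α]

lemma card_parts_partition_eq_card_quotient (τ : Perm α) :
    τ.partition.parts.card = Nat.card (Quotient (SameCycle.setoid τ)) := by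
  let label : α → Perm α ⊕ α := fun x =>
    if x ∈ τ.support then .inl (τ.cycleOf x) else .inr x
  have hker : SameCycle.setoid τ = Setoid.ker label := by
    ext x y
    show τ.SameCycle x y ↔ label x = label y
    by_cases hx : x ∈ τ.support <;> by_cases hy : y ∈ τ.support <;> simp only [label, hx, hy,
      if_true, if_false, Sum.inl.injEq, Sum.inr.injEq, reduceCtorEq, iff_false]
    · exact sameCycle_iff_cycleOf_eq_of_mem_support hx hy
    · exact fun h => hy (h.mem_support_iff.mp hx)
    · exact fun h => hx (h.mem_support_iff.mpr hy)
    · exact ⟨fun h => h.eq_of_left (notMem_support.mp hx), fun h => h ▸ .rfl⟩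
  have hrange : Finset.univ.image label = τ.cycleFactorsFinset.disjSum τ.supportᶜ := by
    ext (c | x) <;> simp only [mem_image, mem_univ, true_and, inl_mem_disjSum, inr_mem_disjSum,
      mem_compl, label]
    · constructor
      · rintro ⟨y, hy⟩
        split_ifs at hy with hys
        cases hy
        exact cycleOf_mem_cycleFactorsFinset_iff.mpr hys
      · intro hc
        obtain ⟨y, hy⟩ := (mem_cycleFactorsFinset_iff.mp hc).1.nonempty_support
        exact ⟨y, by rw [if_pos (mem_cycleFactorsFinset_support_le hc hy),
          ← cycle_is_cycleOf hy hc]⟩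
    · constructor
      · rintro ⟨y, hy⟩
        split_ifs at hy with hys
        cases hy
        exact hys
      · exact fun hx => ⟨x, if_neg hx⟩
  calc τ.partition.parts.card = #τ.cycleFactorsFinset + #τ.supportᶜ := by
        rw [parts_partition, Multiset.card_add, Multiset.card_replicate, cycleType_def,
          Multiset.card_map, card_compl]; rfl
    _ = Nat.card (Set.range label) := by
        rw [← card_disjSum, ← hrange, Nat.card_eq_card_toFinset, Set.toFinset_range]
    _ = Nat.card (Quotient (SameCycle.setoid τ)) := by
        rw [hker, Nat.card_congr (Setoid.quotientKerEquivRange label)]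

lemma card_quotient_sameCycle_mul_swap_le (τ : Perm α) (a b : α) :
    Nat.card (Quotient (SameCycle.setoid (τ * swap a b)))
      ≤ Nat.card (Quotient (SameCycle.setoid τ)) + 1 := by
  set π := τ * swap a b
  -- `g` merges the `π`-cycle of `b` into that of `a`, which makes it constant on `τ`-cycles
  let g : α → Quotient (SameCycle.setoid π) := fun x =>
    if π.SameCycle x b then ⟦a⟧ else ⟦x⟧
  have hg_sameCycle : ∀ x y, π.SameCycle x y → g x = g y := by
    intro x y hxy
    have hb : π.SameCycle x b ↔ π.SameCycle y b := ⟨hxy.symm.trans, hxy.trans⟩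
    simp only [g, hb]
    split_ifs
    · rfl
    · exact Quotient.sound hxy
  have hga : g a = ⟦a⟧ := by simp only [g]; split_ifs <;> rfl
  have hgb : g b = ⟦a⟧ := if_pos .rfl
  have hg_swap : ∀ x, g (swap a b x) = g x := by
    intro x
    rcases eq_or_ne x a with rfl | hxa
    · rw [swap_apply_left, hga, hgb]
    rcases eq_or_ne x b with rfl | hxb
    · rw [swap_apply_right, hga, hgb]
    rw [swap_apply_of_ne_of_ne hxa hxb]
  have hg : g ∘ τ = g := by
    funext x
    have hτ : τ x = π (swap a b x) := by simp [π]
    rw [Function.comp_apply, hτ, ← hg_swap x]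
    exact (hg_sameCycle _ _ (sameCycle_apply_right.mpr .rfl)).symm
  let G : Quotient (SameCycle.setoid τ) → Quotient (SameCycle.setoid π) :=
    Quotient.lift g fun _ _ => SameCycle.apply_eq_of_comp_eq hg
  refine Finite.card_le_card_add_one_of_insert_range_eq_univ G ⟦b⟧ ?_
  refine Set.eq_univ_of_forall ?_
  rintro ⟨x⟩
  by_cases hxb : π.SameCycle x b
  · exact .inl (Quotient.sound hxb)
  · exact .inr ⟨⟦x⟧, if_neg hxb⟩

lemma sign_eq_neg_one_pow_card_add_card_parts (τ : Perm α) :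
    sign τ = (-1 : ℤˣ) ^ (Fintype.card α + τ.partition.parts.card) := by
  obtain ⟨d, hd⟩ := Nat.exists_eq_add_of_le (card_le_univ τ.support)
  rw [sign_of_cycleType, parts_partition, Multiset.card_add, Multiset.card_replicate,
    sum_cycleType, hd, Nat.add_sub_cancel_left, show ∀ s k : ℕ, s + d + (k + d) = s + k + 2 * d
      by intros; ring, pow_add _ _ (2 * d), pow_mul, Int.units_sq, one_pow, mul_one]

theorem card_parts_partition_mul_swap (τ : Perm α) {a b : α} (hab : a ≠ b) :
    (τ * swap a b).partition.parts.card = τ.partition.parts.card + 1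
      ∨ τ.partition.parts.card = (τ * swap a b).partition.parts.card + 1 := by
  have hle := card_quotient_sameCycle_mul_swap_le τ a b
  have hge := card_quotient_sameCycle_mul_swap_le (τ * swap a b) a b
  rw [mul_assoc, swap_mul_self, mul_one] at hge
  have hparity : (Fintype.card α + (τ * swap a b).partition.parts.card) % 2
      ≠ (Fintype.card α + τ.partition.parts.card) % 2 := by
    intro heq
    have h := sign_mul τ (swap a b)
    rw [sign_swap hab, sign_eq_neg_one_pow_card_add_card_parts,
      sign_eq_neg_one_pow_card_add_card_parts, Int.units_pow_eq_pow_mod_two, heq,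
      ← Int.units_pow_eq_pow_mod_two, mul_neg_one] at h
    exact units_ne_neg_self _ h
  simp only [card_parts_partition_eq_card_quotient] at hparity ⊢
  omega

end Equiv.Perm

/-- deleting the maximal arrow `i` (the last arrow, of index `n`) from a
loop-less quiver `Q` yields `Q'` with `ξ⁻_Q = ξ⁻_{Q'} ∘ [s(i), t(i)]`; consequently the
number of cycles of `ξ⁻_Q` and of `ξ⁻_{Q'}` differ by exactly one. -/
theorem xiDown_remove_max_arrow {m n : ℕ} (s t : Fin (n + 1) → Fin m)
    (hloop : ∀ i : Fin (n + 1), s i ≠ t i)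
    (σ σ' : Equiv.Perm (Fin m))
    (hσ : ∀ v : Fin m, σ v = xiDown s t v)
    (hσ' : ∀ v : Fin m, σ' v = xiDown (s ∘ Fin.castSucc) (t ∘ Fin.castSucc) v) :
    (∀ v : Fin m,
        xiDown s t v
          = xiDown (s ∘ Fin.castSucc) (t ∘ Fin.castSucc)
              (Equiv.swap (s (Fin.last n)) (t (Fin.last n)) v))
    ∧ (σ.partition.parts.card = σ'.partition.parts.card + 1
        ∨ σ'.partition.parts.card = σ.partition.parts.card + 1) := by
  have hwalk := xiDown_eq_xiDown_castSucc_swap s t (hloop (Fin.last n))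
  have hσσ' : σ = σ' * Equiv.swap (s (Fin.last n)) (t (Fin.last n)) := by
    ext v
    rw [hσ, hwalk, Equiv.Perm.mul_apply, hσ']
  exact ⟨hwalk, hσσ' ▸ σ'.card_parts_partition_mul_swap (hloop (Fin.last n))⟩
end

section
/- Let Q be a loop-less quiver with n arrows and let Q' be obtained from Q by adding a pair of parallel arrows from vertex v to vertex w (v ≠ w), labeled n+1 and n+2 (placed last in the arrow ordering). Then ξ⁻_{Q'} = ξ⁻_Q. In particular the cycle types of Q and Q' coincide. -/
open Matrix Polynomial

private lemma xiAux_congr_bound_s14 {m n : ℕ} (s t : Fin n → Fin m) (b1 b2 : ℕ) (u : Fin m)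
    (h : Finset.univ.filter (fun i : Fin n => (s i = u ∨ t i = u) ∧ i.val < b1)
       = Finset.univ.filter (fun i : Fin n => (s i = u ∨ t i = u) ∧ i.val < b2)) :
    xiAux s t b1 u = xiAux s t b2 u := by
  conv_lhs => rw [xiAux]
  conv_rhs => rw [xiAux]
  rw [h]

private lemma xiAux_cast {m n : ℕ} (s t : Fin n → Fin m) (v w : Fin m) :
    ∀ b, b ≤ n → ∀ u,
      xiAux (fun i : Fin (n + 2) => if h : i.val < n then s ⟨i.val, h⟩ else v)
            (fun i : Fin (n + 2) => if h : i.val < n then t ⟨i.val, h⟩ else w) b u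
        = xiAux s t b u := by
  intro b
  induction b using Nat.strong_induction_on with
  | _ b ih =>
    intro hb u
    set s' : Fin (n + 2) → Fin m := fun i => if h : i.val < n then s ⟨i.val, h⟩ else v with hs'
    set t' : Fin (n + 2) → Fin m := fun i => if h : i.val < n then t ⟨i.val, h⟩ else w with ht'
    have hcast : Monotone (Fin.castLE (Nat.le_add_right n 2)) := fun a b hab => hab
    have hF : Finset.univ.filter (fun i : Fin (n + 2) => (s' i = u ∨ t' i = u) ∧ i.val < b)
        = (Finset.univ.filter (fun i : Fin n => (s i = u ∨ t i = u) ∧ i.val < b)).image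
            (Fin.castLE (Nat.le_add_right n 2)) := by
      ext i
      simp only [Finset.mem_filter, Finset.mem_univ, true_and, Finset.mem_image]
      constructor
      · rintro ⟨hinc, hib⟩
        have hin : i.val < n := lt_of_lt_of_le hib hb
        refine ⟨⟨i.val, hin⟩, ⟨?_, hib⟩, by ext; rfl⟩
        simpa only [hs', ht', dif_pos hin] using hinc
      · rintro ⟨j, ⟨hinc, hjb⟩, rfl⟩
        have hjn : j.val < n := j.isLt
        refine ⟨?_, hjb⟩
        simp only [hs', ht', Fin.castLE]
        rw [dif_pos hjn, dif_pos hjn]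
        simpa using hinc
    by_cases hne : (Finset.univ.filter (fun i : Fin n => (s i = u ∨ t i = u) ∧ i.val < b)).Nonempty
    · have hne' : (Finset.univ.filter
          (fun i : Fin (n + 2) => (s' i = u ∨ t' i = u) ∧ i.val < b)).Nonempty := by
        rw [hF]; exact hne.image _
      conv_lhs => rw [xiAux]
      conv_rhs => rw [xiAux]
      rw [dif_pos hne', dif_pos hne]
      have hmax : (Finset.univ.filter
            (fun i : Fin (n + 2) => (s' i = u ∨ t' i = u) ∧ i.val < b)).max' hne'
          = Fin.castLE (Nat.le_add_right n 2)
              ((Finset.univ.filter (fun i : Fin n => (s i = u ∨ t i = u) ∧ i.val < b)).max'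
                hne) := by
        refine le_antisymm (Finset.max'_le _ _ _ ?_) (Finset.le_max' _ _ ?_)
        · intro y hy
          rw [hF] at hy
          obtain ⟨j, hj, rfl⟩ := Finset.mem_image.mp hy
          exact hcast (Finset.le_max' _ j hj)
        · rw [hF]
          exact Finset.mem_image_of_mem _ (Finset.max'_mem _ hne)
      set M := (Finset.univ.filter (fun i : Fin n => (s i = u ∨ t i = u) ∧ i.val < b)).max' hne
        with hM
      have hMn : M.val < n := M.isLt
      have hMb : M.val < b :=
        (Finset.mem_filter.mp (Finset.max'_mem _ hne)).2.2
      have hoe : otherEnd s' t' (Fin.castLE (Nat.le_add_right n 2) M) u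
          = otherEnd s t M u := by
        simp only [otherEnd, hs', ht', Fin.castLE]
        rw [dif_pos hMn, dif_pos hMn]
      rw [hmax, hoe]
      exact ih M.val hMb (le_of_lt (lt_of_lt_of_le hMb hb)) _
    · have hne' : ¬ (Finset.univ.filter
          (fun i : Fin (n + 2) => (s' i = u ∨ t' i = u) ∧ i.val < b)).Nonempty := by
        rw [hF, Finset.image_nonempty]; exact hne
      conv_lhs => rw [xiAux]
      conv_rhs => rw [xiAux]
      rw [dif_neg hne', dif_neg hne]

private lemma xiAux_step {m n : ℕ} (s t : Fin n → Fin m) {b : ℕ} {u : Fin m} {i : Fin n}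
    (hi : i ∈ Finset.univ.filter (fun j : Fin n => (s j = u ∨ t j = u) ∧ j.val < b))
    (hmax : ∀ j ∈ Finset.univ.filter (fun j : Fin n => (s j = u ∨ t j = u) ∧ j.val < b), j ≤ i) :
    xiAux s t b u = xiAux s t i.val (otherEnd s t i u) := by
  have hne : (Finset.univ.filter
      (fun j : Fin n => (s j = u ∨ t j = u) ∧ j.val < b)).Nonempty := ⟨i, hi⟩
  have hm : (Finset.univ.filter
      (fun j : Fin n => (s j = u ∨ t j = u) ∧ j.val < b)).max' hne = i :=
    le_antisymm (Finset.max'_le _ hne _ hmax) (Finset.le_max' _ _ hi)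
  conv_lhs => rw [xiAux]
  rw [dif_pos hne, hm]

/-- adding a pair of parallel arrows from `v` to `w` (placed last in the
arrow ordering) to a loop-less quiver does not change `ξ⁻`; in particular the cycle
types coincide. -/
theorem xiDown_add_parallel_pair {m n : ℕ} (s t : Fin n → Fin m)
    (hloop : ∀ i : Fin n, s i ≠ t i) (v w : Fin m) (hvw : v ≠ w) :
    (∀ u : Fin m,
        xiDown (fun i : Fin (n + 2) => if h : i.val < n then s ⟨i.val, h⟩ else v)
            (fun i : Fin (n + 2) => if h : i.val < n then t ⟨i.val, h⟩ else w) u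
          = xiDown s t u)
    ∧ ∀ σ σ' : Equiv.Perm (Fin m),
        (∀ u : Fin m, σ u = xiDown s t u) →
        (∀ u : Fin m, σ' u
          = xiDown (fun i : Fin (n + 2) => if h : i.val < n then s ⟨i.val, h⟩ else v)
              (fun i : Fin (n + 2) => if h : i.val < n then t ⟨i.val, h⟩ else w) u) →
        σ.partition = σ'.partition := by
  set s' : Fin (n + 2) → Fin m := fun i => if h : i.val < n then s ⟨i.val, h⟩ else v with hs'
  set t' : Fin (n + 2) → Fin m := fun i => if h : i.val < n then t ⟨i.val, h⟩ else w with ht'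
  have hsn1 : s' ⟨n + 1, by omega⟩ = v := by simp only [hs']; rw [dif_neg (by omega)]
  have htn1 : t' ⟨n + 1, by omega⟩ = w := by simp only [ht']; rw [dif_neg (by omega)]
  have hsn : s' ⟨n, by omega⟩ = v := by simp only [hs']; rw [dif_neg (by omega)]
  have htn : t' ⟨n, by omega⟩ = w := by simp only [ht']; rw [dif_neg (by omega)]
  have hv1 : ((⟨n + 1, by omega⟩ : Fin (n + 2)) : ℕ) = n + 1 := rfl
  have hv0 : ((⟨n, by omega⟩ : Fin (n + 2)) : ℕ) = n := rfl
  have main : ∀ u : Fin m, xiDown s' t' u = xiDown s t u := by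
    intro u
    show xiAux s' t' (n + 2) u = xiAux s t n u
    rw [← xiAux_cast s t v w n le_rfl u]
    by_cases huv : u = v
    · subst huv
      have h1 : (⟨n + 1, by omega⟩ : Fin (n + 2)) ∈ Finset.univ.filter
          (fun j : Fin (n + 2) => (s' j = u ∨ t' j = u) ∧ j.val < n + 2) := by
        simp only [Finset.mem_filter, Finset.mem_univ, true_and]
        exact ⟨Or.inl hsn1, by omega⟩
      have hle1 : ∀ j ∈ Finset.univ.filter
          (fun j : Fin (n + 2) => (s' j = u ∨ t' j = u) ∧ j.val < n + 2),
          j ≤ (⟨n + 1, by omega⟩ : Fin (n + 2)) := by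
        intro j _
        have := j.isLt
        rw [Fin.le_def]
        omega
      rw [xiAux_step s' t' h1 hle1]
      simp only [hv1]
      have hoe : otherEnd s' t' ⟨n + 1, by omega⟩ u = w := by
        rw [otherEnd, if_pos hsn1, htn1]
      rw [hoe]
      have h2 : (⟨n, by omega⟩ : Fin (n + 2)) ∈ Finset.univ.filter
          (fun j : Fin (n + 2) => (s' j = w ∨ t' j = w) ∧ j.val < n + 1) := by
        simp only [Finset.mem_filter, Finset.mem_univ, true_and]
        exact ⟨Or.inr htn, by omega⟩
      have hle2 : ∀ j ∈ Finset.univ.filter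
          (fun j : Fin (n + 2) => (s' j = w ∨ t' j = w) ∧ j.val < n + 1),
          j ≤ (⟨n, by omega⟩ : Fin (n + 2)) := by
        intro j hj
        have := (Finset.mem_filter.mp hj).2.2
        rw [Fin.le_def]
        omega
      rw [xiAux_step s' t' h2 hle2]
      simp only [hv0]
      have hoe2 : otherEnd s' t' ⟨n, by omega⟩ w = u := by
        rw [otherEnd, if_neg (by rw [hsn]; exact hvw), hsn]
      rw [hoe2]
    · by_cases huw : u = w
      · subst huw
        have h1 : (⟨n + 1, by omega⟩ : Fin (n + 2)) ∈ Finset.univ.filter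
            (fun j : Fin (n + 2) => (s' j = u ∨ t' j = u) ∧ j.val < n + 2) := by
          simp only [Finset.mem_filter, Finset.mem_univ, true_and]
          exact ⟨Or.inr htn1, by omega⟩
        have hle1 : ∀ j ∈ Finset.univ.filter
            (fun j : Fin (n + 2) => (s' j = u ∨ t' j = u) ∧ j.val < n + 2),
            j ≤ (⟨n + 1, by omega⟩ : Fin (n + 2)) := by
          intro j _
          have := j.isLt
          rw [Fin.le_def]
          omega
        rw [xiAux_step s' t' h1 hle1]
        simp only [hv1]
        have hoe : otherEnd s' t' ⟨n + 1, by omega⟩ u = v := by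
          rw [otherEnd, if_neg (by rw [hsn1]; exact hvw), hsn1]
        rw [hoe]
        have h2 : (⟨n, by omega⟩ : Fin (n + 2)) ∈ Finset.univ.filter
            (fun j : Fin (n + 2) => (s' j = v ∨ t' j = v) ∧ j.val < n + 1) := by
          simp only [Finset.mem_filter, Finset.mem_univ, true_and]
          exact ⟨Or.inl hsn, by omega⟩
        have hle2 : ∀ j ∈ Finset.univ.filter
            (fun j : Fin (n + 2) => (s' j = v ∨ t' j = v) ∧ j.val < n + 1),
            j ≤ (⟨n, by omega⟩ : Fin (n + 2)) := by
          intro j hj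
          have := (Finset.mem_filter.mp hj).2.2
          rw [Fin.le_def]
          omega
        rw [xiAux_step s' t' h2 hle2]
        simp only [hv0]
        have hoe2 : otherEnd s' t' ⟨n, by omega⟩ v = u := by
          rw [otherEnd, if_pos hsn, htn]
        rw [hoe2]
      · apply xiAux_congr_bound_s14
        ext i
        simp only [Finset.mem_filter, Finset.mem_univ, true_and]
        constructor
        · rintro ⟨hinc, -⟩
          refine ⟨hinc, ?_⟩
          by_contra hni
          push_neg at hni
          have hsv : s' i = v := by simp only [hs']; rw [dif_neg (by omega)]
          have htw : t' i = w := by simp only [ht']; rw [dif_neg (by omega)]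
          rcases hinc with h | h
          · exact huv (h ▸ hsv)
          · exact huw (h ▸ htw)
        · rintro ⟨hinc, h⟩; exact ⟨hinc, by omega⟩
  refine ⟨main, ?_⟩
  intro σ σ' h1 h2
  have hσ : σ = σ' := Equiv.ext fun u => by rw [h1 u, h2 u, main u]
  rw [hσ]
end
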